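/- Let 0 < q < 1, ν ∈ ℝ, μ > 0 and δ ∈ {0,1}. Define the quantum Whittaker vector ψ_R(z̄, z) = ξ₁(z̄) ξ₂(z), where ξ₁(w) = ∑_{n=0}^∞ (iμ)^n q^{n(n−1)/2 + n(1−iν)} (1−q²)^n w^n / (q²;q²)_n and ξ₂(z) = ∑_{k=0}^∞ (iμ)^k q^{(3−2δ)k(k−1)/2 + k(1−iν) + (iνδ−2δ+2)k} (1−q²)^k z^k / (q²;q²)_k (both series converge for all arguments). Let π(B) act in the variable z by (ψ.π(B))(z̄,z) = q^{iν/2}(ψ(z̄, q^{−1}z) − ψ(z̄, qz))/((1−q²)z) and π(B*) act in the variable z̄ by (π(B*).ψ)(z̄,z) = q^{iν/2}(ψ(q^{−1}z̄, z) − ψ(qz̄, z))/((1−q²)z̄). Then for all z, z̄ ∈ ℂ∖{0}: (π(B*).(ψ_R.π(B)))(z̄, z) = −μ² q^{(iν−2)(δ−1)} ψ_R(z̄, q^{2−2δ} z). -/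

import Mathlib

/-- The finite q-Pochhammer symbol `(a;Q)_n = ∏_{j<n} (1 − a Q^j)`. -/
noncomputable def qPoch (Q a : ℂ) (n : ℕ) : ℂ :=
  ∏ j ∈ Finset.range n, (1 - a * Q ^ j)

/-- `q^w = exp(w ln q)` for real `q > 0` and complex `w`. -/
noncomputable def qpow (q : ℝ) (w : ℂ) : ℂ := Complex.exp (w * (Real.log q : ℂ))

/-- `ξ₁(w) = ∑_n (iμ)^n q^{n(n−1)/2 + n(1−iν)} (1−q²)^n w^n/(q²;q²)_n`. -/
noncomputable def xi1 (q ν μ : ℝ) (w : ℂ) : ℂ :=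
  ∑' n : ℕ, (Complex.I * μ) ^ n
    * qpow q ((n : ℂ) * ((n : ℂ) - 1) / 2 + (n : ℂ) * (1 - Complex.I * ν))
    * (1 - (q : ℂ) ^ 2) ^ n * w ^ n / qPoch ((q : ℂ) ^ 2) ((q : ℂ) ^ 2) n

/-- `ξ₂(z) = ∑_k (iμ)^k q^{(3−2δ)k(k−1)/2 + k(1−iν) + (iνδ−2δ+2)k}(1−q²)^k z^k/(q²;q²)_k`. -/
noncomputable def xi2 (q ν μ : ℝ) (δ : ℕ) (z : ℂ) : ℂ :=
  ∑' k : ℕ, (Complex.I * μ) ^ k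
    * qpow q ((3 - 2 * (δ : ℂ)) * k * ((k : ℂ) - 1) / 2 + (k : ℂ) * (1 - Complex.I * ν)
        + (Complex.I * ν * δ - 2 * δ + 2) * k)
    * (1 - (q : ℂ) ^ 2) ^ k * z ^ k / qPoch ((q : ℂ) ^ 2) ((q : ℂ) ^ 2) k

/-- The quantum Whittaker vector `ψ_R(z̄,z) = ξ₁(z̄)ξ₂(z)`. -/
noncomputable def psiR (q ν μ : ℝ) (δ : ℕ) (zb z : ℂ) : ℂ :=
  xi1 q ν μ zb * xi2 q ν μ δ z

/-- `π(B)` acting in the holomorphic variable `z`. -/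
noncomputable def actB (q ν : ℝ) (ψ : ℂ → ℂ → ℂ) : ℂ → ℂ → ℂ :=
  fun zb z => qpow q (Complex.I * ν / 2) * (ψ zb ((q : ℂ)⁻¹ * z) - ψ zb ((q : ℂ) * z))
    / ((1 - (q : ℂ) ^ 2) * z)

/-- `π(B*)` acting in the antiholomorphic variable `z̄`. -/
noncomputable def actBstar (q ν : ℝ) (ψ : ℂ → ℂ → ℂ) : ℂ → ℂ → ℂ :=
  fun zb z => qpow q (Complex.I * ν / 2) * (ψ ((q : ℂ)⁻¹ * zb) z - ψ ((q : ℂ) * zb) z)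
    / ((1 - (q : ℂ) ^ 2) * zb)

/-! Both `ξ₁` and `ξ₂` are power series `∑ cₙ wⁿ` whose coefficients obey a first-order
`q`-recursion `cₙ₊₁ (q^{-(n+1)} − q^{n+1}) = a ρⁿ cₙ`, with `ρ = 1` for `ξ₁` and `ρ = q^{2−2δ}`
for `ξ₂`. Comparing coefficients gives the `q`-difference equation
`ξ(q⁻¹w) − ξ(qw) = a w ξ(ρw)`, so `π(B)` and `π(B*)` act on `ψ_R = ξ₁ ξ₂` by a scalar and the
substitution `z ↦ q^{2−2δ} z`; the two scalars multiply to `−μ² q^{(iν−2)(δ−1)}`. Since `‖ρ‖ ≤ 1`,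
the same recursion bounds `‖cₙ₊₁‖/‖cₙ‖` by a multiple of `qⁿ`, so the series converge everywhere. -/

open Complex

section qpow

variable {q : ℝ}

lemma qpow_add (a b : ℂ) : qpow q (a + b) = qpow q a * qpow q b := by
  rw [qpow, add_mul, exp_add, qpow, qpow]

lemma qpow_zero : qpow q 0 = 1 := by simp [qpow]

lemma qpow_nat_mul (n : ℕ) (w : ℂ) : qpow q (n * w) = qpow q w ^ n := by
  rw [qpow, qpow, ← exp_nat_mul, mul_assoc]

lemma qpow_natCast (hq : 0 < q) (n : ℕ) : qpow q n = (q : ℂ) ^ n := by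
  rw [← mul_one (n : ℂ), qpow_nat_mul, qpow, one_mul, ← ofReal_exp, Real.exp_log hq]

lemma norm_qpow_le_one (hq0 : 0 < q) (hq1 : q < 1) {w : ℂ} (hw : 0 ≤ w.re) :
    ‖qpow q w‖ ≤ 1 := by
  rw [qpow, norm_exp, Real.exp_le_one_iff, re_mul_ofReal]
  exact mul_nonpos_of_nonneg_of_nonpos hw (Real.log_nonpos hq0.le hq1.le)

end qpow

lemma qPoch_succ (Q a : ℂ) (n : ℕ) : qPoch Q a (n + 1) = qPoch Q a n * (1 - a * Q ^ n) :=
  Finset.prod_range_succ _ n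

lemma qPoch_ne_zero {Q a : ℂ} (ha : ‖a‖ < 1) (hQ : ‖Q‖ ≤ 1) (n : ℕ) : qPoch Q a n ≠ 0 := by
  refine Finset.prod_ne_zero_iff.mpr fun j _ => sub_ne_zero.mpr fun h => ?_
  have : ‖a * Q ^ j‖ < 1 := by
    rw [norm_mul, norm_pow]
    exact (mul_le_of_le_one_right (norm_nonneg a) (pow_le_one₀ (norm_nonneg Q) hQ)).trans_lt ha
  rw [← h, norm_one] at this
  exact this.false

section powSeries

variable {𝕜 : Type*} [NormedField 𝕜]

noncomputable def powSeries (c : ℕ → 𝕜) (w : 𝕜) : 𝕜 := ∑' n, c n * w ^ n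

lemma summable_mul_pow_of_norm_succ_le [CompleteSpace 𝕜] {c : ℕ → 𝕜} {K r : ℝ}
    (hr0 : 0 ≤ r) (hr1 : r < 1) (hc : ∀ n, ‖c (n + 1)‖ ≤ K * r ^ n * ‖c n‖) (w : 𝕜) :
    Summable fun n => c n * w ^ n := by
  refine summable_of_ratio_norm_eventually_le (r := 1 / 2) (by norm_num) ?_
  have hsmall : ∀ᶠ n in Filter.atTop, K * ‖w‖ * r ^ n ≤ 1 / 2 := by
    refine Filter.Tendsto.eventually_le_const (by norm_num : (0 : ℝ) < 1 / 2) ?_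
    simpa using (tendsto_pow_atTop_nhds_zero_of_lt_one hr0 hr1).const_mul (K * ‖w‖)
  filter_upwards [hsmall] with n hn
  calc ‖c (n + 1) * w ^ (n + 1)‖ ≤ K * r ^ n * ‖c n‖ * ‖w‖ ^ (n + 1) := by
        rw [norm_mul, norm_pow]; gcongr; exact hc n
    _ = K * ‖w‖ * r ^ n * ‖c n * w ^ n‖ := by rw [norm_mul, norm_pow]; ring
    _ ≤ 1 / 2 * ‖c n * w ^ n‖ := by gcongr

lemma powSeries_inv_mul_sub_powSeries_mul {c : ℕ → 𝕜} {t a ρ : 𝕜}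
    (hrec : ∀ n, c (n + 1) * (t⁻¹ ^ (n + 1) - t ^ (n + 1)) = a * ρ ^ n * c n) {w : 𝕜}
    (hinv : Summable fun n => c n * (t⁻¹ * w) ^ n) (h : Summable fun n => c n * (t * w) ^ n) :
    powSeries c (t⁻¹ * w) - powSeries c (t * w) = a * w * powSeries c (ρ * w) := by
  have hterm : ∀ n, c (n + 1) * (t⁻¹ * w) ^ (n + 1) - c (n + 1) * (t * w) ^ (n + 1)
      = a * w * (c n * (ρ * w) ^ n) := fun n => by
    linear_combination w ^ (n + 1) * hrec n
  rw [powSeries, powSeries, ← hinv.tsum_sub h, (hinv.sub h).tsum_eq_zero_add, tsum_congr hterm,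
    tsum_mul_left, powSeries]
  simp

end powSeries

section recursion

variable {q : ℝ} (hq0 : 0 < q) (hq1 : q < 1)
include hq0 hq1

lemma norm_succ_le_of_qRec {c : ℕ → ℂ} {a ρ : ℂ} (hρ : ‖ρ‖ ≤ 1)
    (hrec : ∀ n, c (n + 1) * ((q : ℂ)⁻¹ ^ (n + 1) - (q : ℂ) ^ (n + 1)) = a * ρ ^ n * c n)
    (n : ℕ) : ‖c (n + 1)‖ ≤ ‖a‖ * q / (1 - q ^ 2) * q ^ n * ‖c n‖ := by
  have hq2 : 0 < 1 - q ^ 2 := by nlinarith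
  -- `q^{n+1} (q^{-(n+1)} − q^{n+1}) = 1 − q^{2(n+1)} ≥ 1 − q²`
  have hgap : 1 - q ^ 2 ≤ q ^ (n + 1) * (q⁻¹ ^ (n + 1) - q ^ (n + 1)) := by
    rw [mul_sub, ← mul_pow, mul_inv_cancel₀ hq0.ne', one_pow, ← pow_add]
    gcongr 1 - ?_
    exact pow_le_pow_of_le_one hq0.le hq1.le (by omega)
  have hnorm : ‖c (n + 1)‖ * (q⁻¹ ^ (n + 1) - q ^ (n + 1)) ≤ ‖a‖ * ‖c n‖ := by
    have h := congrArg norm (hrec n)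
    rw [show (q : ℂ)⁻¹ ^ (n + 1) - (q : ℂ) ^ (n + 1) = ((q⁻¹ ^ (n + 1) - q ^ (n + 1) : ℝ) : ℂ) by
      push_cast; ring, norm_mul, norm_real, norm_mul, norm_mul, norm_pow] at h
    have hd : 0 ≤ q⁻¹ ^ (n + 1) - q ^ (n + 1) := by nlinarith [pow_pos hq0 (n + 1)]
    rw [Real.norm_of_nonneg hd] at h
    rw [h]
    gcongr
    exact mul_le_of_le_one_right (norm_nonneg a) (pow_le_one₀ (norm_nonneg ρ) hρ)
  rw [div_mul_eq_mul_div, div_mul_eq_mul_div, le_div_iff₀ hq2]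
  calc ‖c (n + 1)‖ * (1 - q ^ 2)
      ≤ ‖c (n + 1)‖ * (q ^ (n + 1) * (q⁻¹ ^ (n + 1) - q ^ (n + 1))) := by gcongr
    _ ≤ q ^ (n + 1) * (‖a‖ * ‖c n‖) := by rw [mul_left_comm]; gcongr
    _ = ‖a‖ * q * q ^ n * ‖c n‖ := by ring

lemma powSeries_inv_mul_sub_powSeries_mul_of_qRec {c : ℕ → ℂ} {a ρ : ℂ} (hρ : ‖ρ‖ ≤ 1)
    (hrec : ∀ n, c (n + 1) * ((q : ℂ)⁻¹ ^ (n + 1) - (q : ℂ) ^ (n + 1)) = a * ρ ^ n * c n)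
    (w : ℂ) : powSeries c ((q : ℂ)⁻¹ * w) - powSeries c (q * w) = a * w * powSeries c (ρ * w) :=
  have hsum := summable_mul_pow_of_norm_succ_le hq0.le hq1 (norm_succ_le_of_qRec hq0 hq1 hρ hrec)
  powSeries_inv_mul_sub_powSeries_mul hrec (hsum _) (hsum _)

end recursion

noncomputable def qCoeff (q : ℝ) (b : ℂ) (E : ℕ → ℂ) (n : ℕ) : ℂ :=
  b ^ n * qpow q (E n) * (1 - (q : ℂ) ^ 2) ^ n / qPoch ((q : ℂ) ^ 2) ((q : ℂ) ^ 2) n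

lemma qCoeff_succ_mul {q : ℝ} (hq0 : 0 < q) (hq1 : q < 1) (b : ℂ) {E : ℕ → ℂ} {L R : ℂ}
    (hE : ∀ n : ℕ, E (n + 1) = E n + L + n * R + (n + 1)) (n : ℕ) :
    qCoeff q b E (n + 1) * ((q : ℂ)⁻¹ ^ (n + 1) - (q : ℂ) ^ (n + 1))
      = b * qpow q L * (1 - (q : ℂ) ^ 2) * qpow q R ^ n * qCoeff q b E n := by
  have hq : (q : ℂ) ≠ 0 := ofReal_ne_zero.mpr hq0.ne'
  have hq2 : ‖(q : ℂ) ^ 2‖ < 1 := by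
    rw [norm_pow, norm_real, Real.norm_of_nonneg hq0.le]; nlinarith
  have hP := qPoch_ne_zero hq2 hq2.le n
  have hfactor : 1 - (q : ℂ) ^ 2 * ((q : ℂ) ^ 2) ^ n ≠ 0 := by
    simpa [qPoch_succ, hP] using qPoch_ne_zero hq2 hq2.le (n + 1)
  have hexp : qpow q (E (n + 1)) = qpow q L * qpow q R ^ n * qpow q (E n) * (q : ℂ) ^ (n + 1) := by
    rw [← qpow_nat_mul, ← qpow_natCast hq0, ← qpow_add, ← qpow_add, ← qpow_add, hE]
    congr 1
    push_cast
    ring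
  rw [qCoeff, qCoeff, qPoch_succ, hexp, inv_pow]
  field_simp
  ring

lemma xi1_eq_powSeries (q ν μ : ℝ) :
    xi1 q ν μ
      = powSeries (qCoeff q (I * μ) fun n => (n : ℂ) * ((n : ℂ) - 1) / 2 + n * (1 - I * ν)) :=
  funext fun _ => tsum_congr fun _ => (div_mul_eq_mul_div _ _ _).symm

lemma xi2_eq_powSeries (q ν μ : ℝ) (δ : ℕ) :
    xi2 q ν μ δ = powSeries (qCoeff q (I * μ) fun k => (3 - 2 * (δ : ℂ)) * k * ((k : ℂ) - 1) / 2
      + k * (1 - I * ν) + (I * ν * δ - 2 * δ + 2) * k) :=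
  funext fun _ => tsum_congr fun _ => (div_mul_eq_mul_div _ _ _).symm

section whittaker

variable {q : ℝ} (ν μ : ℝ) (hq0 : 0 < q) (hq1 : q < 1)
include hq0 hq1

lemma xi1_inv_mul_sub_xi1_mul (w : ℂ) :
    xi1 q ν μ ((q : ℂ)⁻¹ * w) - xi1 q ν μ (q * w)
      = I * μ * qpow q (-(I * ν)) * (1 - (q : ℂ) ^ 2) * w * xi1 q ν μ w := by
  rw [xi1_eq_powSeries]
  simpa only [qpow_zero, one_pow, one_mul] using
    powSeries_inv_mul_sub_powSeries_mul_of_qRec hq0 hq1 (norm_qpow_le_one hq0 hq1 le_rfl)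
      (qCoeff_succ_mul hq0 hq1 (I * μ) (L := -(I * ν)) (R := 0) (fun n => by push_cast; ring)) w

lemma xi2_inv_mul_sub_xi2_mul {δ : ℕ} (hδ : δ ≤ 1) (z : ℂ) :
    xi2 q ν μ δ ((q : ℂ)⁻¹ * z) - xi2 q ν μ δ (q * z)
      = I * μ * qpow q (2 - I * ν + I * ν * δ - 2 * δ) * (1 - (q : ℂ) ^ 2) * z
        * xi2 q ν μ δ (qpow q (2 - 2 * (δ : ℂ)) * z) := by
  have hρ : ‖qpow q (2 - 2 * (δ : ℂ))‖ ≤ 1 := norm_qpow_le_one hq0 hq1 (by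
    simp only [sub_re, mul_re, re_ofNat, im_ofNat, natCast_re, natCast_im]
    have : (δ : ℝ) ≤ 1 := by exact_mod_cast hδ
    linarith)
  rw [xi2_eq_powSeries]
  exact powSeries_inv_mul_sub_powSeries_mul_of_qRec hq0 hq1 hρ
    (qCoeff_succ_mul hq0 hq1 (I * μ) (fun n => by push_cast; ring)) z

end whittaker

section actions

variable {q ν : ℝ} {ψ : ℂ → ℂ → ℂ} {a c F zb z : ℂ}

lemma actB_apply_of_sub {g : ℂ → ℂ} (hD : (1 - (q : ℂ) ^ 2) * z ≠ 0) (hψ : ∀ w, ψ zb w = c * g w)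
    (hg : g ((q : ℂ)⁻¹ * z) - g (q * z) = a * (1 - (q : ℂ) ^ 2) * z * F) :
    actB q ν ψ zb z = c * (qpow q (I * ν / 2) * a * F) := by
  rw [actB, hψ, hψ, ← mul_sub, hg, div_eq_iff hD]
  ring

lemma actBstar_apply_of_sub {f : ℂ → ℂ} (hD : (1 - (q : ℂ) ^ 2) * zb ≠ 0)
    (hψ : ∀ w, ψ w z = f w * c)
    (hf : f ((q : ℂ)⁻¹ * zb) - f (q * zb) = a * (1 - (q : ℂ) ^ 2) * zb * F) :
    actBstar q ν ψ zb z = qpow q (I * ν / 2) * a * F * c := by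
  rw [actBstar, hψ, hψ, ← sub_mul, hf, div_eq_iff hD]
  ring

end actions

theorem psiR_whittaker_condition_general (q ν μ : ℝ) (hq0 : 0 < q) (hq1 : q < 1)
    (δ : ℕ) (hδ : δ = 0 ∨ δ = 1)
    (zb z : ℂ) (hzb : zb ≠ 0) (hz : z ≠ 0) :
    actBstar q ν (actB q ν (psiR q ν μ δ)) zb z
      = -((μ : ℂ) ^ 2) * qpow q ((Complex.I * ν - 2) * ((δ : ℂ) - 1))
          * psiR q ν μ δ zb (qpow q (2 - 2 * (δ : ℂ)) * z) := by
  have hq2 : 1 - (q : ℂ) ^ 2 ≠ 0 := by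
    rw [sub_ne_zero, ne_comm]
    exact_mod_cast (by nlinarith : q ^ 2 ≠ 1)
  have hB : ∀ w, actB q ν (psiR q ν μ δ) w z = xi1 q ν μ w
      * (qpow q (I * ν / 2) * (I * μ * qpow q (2 - I * ν + I * ν * δ - 2 * δ))
        * xi2 q ν μ δ (qpow q (2 - 2 * (δ : ℂ)) * z)) := fun _ =>
    actB_apply_of_sub (mul_ne_zero hq2 hz) (fun _ => rfl)
      (xi2_inv_mul_sub_xi2_mul ν μ hq0 hq1 (by omega) z)
  have hexp : qpow q (I * ν / 2) * qpow q (-(I * ν)) * qpow q (I * ν / 2)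
      * qpow q (2 - I * ν + I * ν * δ - 2 * δ) = qpow q ((I * ν - 2) * ((δ : ℂ) - 1)) := by
    rw [← qpow_add, ← qpow_add, ← qpow_add]
    ring_nf
  rw [actBstar_apply_of_sub (mul_ne_zero hq2 hzb) hB (xi1_inv_mul_sub_xi1_mul ν μ hq0 hq1 zb),
    psiR, ← hexp]
  ring_nf
  rw [I_sq]
  ring

/-- The quantum Whittaker vector condition:
`(π(B*).(ψ_R.π(B)))(z̄,z) = −μ² q^{(iν−2)(δ−1)} ψ_R(z̄, q^{2−2δ}z)` for all
nonzero `z, z̄`. -/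
theorem psiR_whittaker_condition (q ν μ : ℝ) (hq0 : 0 < q) (hq1 : q < 1)
    (hμ : 0 < μ) (δ : ℕ) (hδ : δ = 0 ∨ δ = 1)
    (zb z : ℂ) (hzb : zb ≠ 0) (hz : z ≠ 0) :
    actBstar q ν (actB q ν (psiR q ν μ δ)) zb z
      = -((μ : ℂ) ^ 2) * qpow q ((Complex.I * ν - 2) * ((δ : ℂ) - 1))
          * psiR q ν μ δ zb (qpow q (2 - 2 * (δ : ℂ)) * z) :=
  psiR_whittaker_condition_general q ν μ hq0 hq1 δ hδ zb z hzb hz
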